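/- arXiv:2110.12015 — 6 statements merged into one kernel-verified Lean document; each statement's English description precedes it below -/
import Mathlib

section
/- Let C ⊆ ℝ^m be a closed convex cone, let S be an index set and, for each w ∈ S, let E_w ⊆ C be a finite linearly independent set of vectors such that C = ⋃_{w∈S} cone(E_w), where cone(E_w) is the set of nonnegative linear combinations of elements of E_w. Then a matrix M ∈ ℝ^{n×m} is C-linearly independent if, and only if, for every fixed w ∈ S the finite indexed family {Mv}_{v∈E_w} is positively linearly independent. -/
/-- Let `C ⊆ ℝ^m` be a closed convex cone, `S` an index set and, for each
`w ∈ S`, let `E w ⊆ C` be a finite linearly independent set of vectors such that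
`C = ⋃_{w ∈ S} cone (E w)`, where `cone (E w)` is the set of nonnegative linear combinations
of elements of `E w`.  Then a matrix `M ∈ ℝ^{n×m}` is `C`-linearly independent (i.e. the only
`v ∈ C` with `M v = 0` is `v = 0`) iff for every fixed `w ∈ S` the finite indexed family
`{M v}_{v ∈ E w}` is positively linearly independent. -/
theorem stmt0 {n m : ℕ} {S : Type*} (C : Set (Fin m → ℝ))
    (hCclosed : IsClosed C) (hCconvex : Convex ℝ C)
    (hCcone : ∀ c : ℝ, 0 ≤ c → ∀ v ∈ C, c • v ∈ C)
    (E : S → Finset (Fin m → ℝ))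
    (hEsub : ∀ w, (E w : Set (Fin m → ℝ)) ⊆ C)
    (hEli : ∀ w, LinearIndependent ℝ (fun v : (E w) => (v : Fin m → ℝ)))
    (hCunion : C = ⋃ w : S, {y : Fin m → ℝ | ∃ c : (Fin m → ℝ) → ℝ,
      (∀ v ∈ E w, 0 ≤ c v) ∧ y = ∑ v ∈ E w, c v • v})
    (M : Matrix (Fin n) (Fin m) ℝ) :
    (∀ v ∈ C, M.mulVec v = 0 → v = 0) ↔
      ∀ w : S, ∀ α : (Fin m → ℝ) → ℝ, (∀ v ∈ E w, 0 ≤ α v) →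
        ∑ v ∈ E w, α v • M.mulVec v = 0 → ∀ v ∈ E w, α v = 0 := by
  constructor
  · intro hM w α hα hsum v hv
    set x := ∑ v ∈ E w, α v • v with hx
    have hxC : x ∈ C := by
      rw [hCunion]
      exact Set.mem_iUnion.2 ⟨w, α, hα, rfl⟩
    have hMx : M.mulVec x = 0 := by
      have : M.mulVec x = ∑ v ∈ E w, α v • M.mulVec v := by
        rw [hx]
        simp only [← Matrix.mulVecLin_apply, map_sum, map_smul]
      rw [this, hsum]
    have hx0 : x = 0 := hM x hxC hMx
    have hsum' : ∑ i : (E w), α i • (i : Fin m → ℝ) = 0 := by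
      rw [Finset.sum_coe_sort (E w) (fun v => α v • v)]
      exact hx0
    exact Fintype.linearIndependent_iff.mp (hEli w) (fun i => α i) hsum' ⟨v, hv⟩
  · intro h v hv hMv
    rw [hCunion] at hv
    obtain ⟨w, c, hc, rfl⟩ := Set.mem_iUnion.1 hv
    have hsum : ∑ u ∈ E w, c u • M.mulVec u = 0 := by
      rw [← hMv]
      simp only [← Matrix.mulVecLin_apply, map_sum, map_smul]
    have h0 := h w c hc hsum
    exact Finset.sum_eq_zero fun u hu => by rw [h0 u hu, zero_smul]
end

section
/- Let m > 1 and M ∈ ℝ^{n×m}. (i) M is Λ_m-linearly independent if, and only if, for every w ∈ ℝ^{m−1} with ‖w‖ = 1, the two vectors M(1,−w) and M(1,w) are positively linearly independent. (ii) M is injective if, and only if, for every w ∈ ℝ^{m−1} with ‖w‖ = 1, the two vectors M(1,−w) and M(1,w) are linearly independent. -/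
noncomputable section

/-- The "hat" part `ŷ ∈ ℝ^p` (with the Euclidean norm) of a vector `y ∈ ℝ^{p+1}`. -/
def hatPart {p : ℕ} (y : Fin (p + 1) → ℝ) : EuclideanSpace ℝ (Fin p) :=
  WithLp.toLp 2 (fun i : Fin p => y i.succ)

/-- The vector `(a, w) ∈ ℝ^{p+1}`. -/
def consVec {p : ℕ} (a : ℝ) (w : EuclideanSpace ℝ (Fin p)) : Fin (p + 1) → ℝ :=
  Fin.cons a (fun i => w i)

lemma comb_apply_zero {p : ℕ} (w : EuclideanSpace ℝ (Fin p)) (a b : ℝ) :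
    (a • consVec 1 (-w) + b • consVec 1 w) 0 = a + b := by
  simp [consVec, Fin.cons_zero]

lemma comb_apply_succ {p : ℕ} (w : EuclideanSpace ℝ (Fin p)) (a b : ℝ) (i : Fin p) :
    (a • consVec 1 (-w) + b • consVec 1 w) i.succ = (b - a) * w i := by
  simp [consVec, Fin.cons_succ]
  ring

/-- A vector identity expressing `v` as a conic combination. -/
lemma exists_decomp {p : ℕ} (hp : 1 ≤ p) (v : Fin (p + 1) → ℝ) :
    ∃ w : EuclideanSpace ℝ (Fin p), ‖w‖ = 1 ∧
      ((v 0 - ‖hatPart v‖) / 2) • consVec 1 (-w)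
        + ((v 0 + ‖hatPart v‖) / 2) • consVec 1 w = v := by
  by_cases h : hatPart v = 0
  · refine ⟨EuclideanSpace.single (⟨0, hp⟩ : Fin p) (1 : ℝ), by
      simp [EuclideanSpace.norm_single], ?_⟩
    have hn : ‖hatPart v‖ = 0 := by rw [h, norm_zero]
    funext j
    refine Fin.cases ?_ (fun i => ?_) j
    · rw [comb_apply_zero]; ring
    · rw [comb_apply_succ]
      have : v i.succ = 0 := by simpa [hatPart] using congrArg (fun x : EuclideanSpace ℝ (Fin p) => x i) h
      rw [this, hn]; ring
  · have hn : ‖hatPart v‖ ≠ 0 := by simpa using h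
    refine ⟨‖hatPart v‖⁻¹ • hatPart v, ?_, ?_⟩
    · rw [norm_smul]
      simp [abs_of_nonneg (inv_nonneg.2 (norm_nonneg _)), inv_mul_cancel₀ hn]
    · funext j
      refine Fin.cases ?_ (fun i => ?_) j
      · rw [comb_apply_zero]; ring
      · rw [comb_apply_succ]
        have happ : (‖hatPart v‖⁻¹ • hatPart v) i = ‖hatPart v‖⁻¹ * v i.succ := rfl
        rw [happ]
        field_simp
        ring

lemma mulVec_comb {n p : ℕ} (M : Matrix (Fin n) (Fin (p + 1)) ℝ)
    (w : EuclideanSpace ℝ (Fin p)) (a b : ℝ) :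
    M.mulVec (a • consVec 1 (-w) + b • consVec 1 w)
      = a • M.mulVec (consVec 1 (-w)) + b • M.mulVec (consVec 1 w) := by
  rw [Matrix.mulVec_add, Matrix.mulVec_smul, Matrix.mulVec_smul]

/-- Let `m = p + 1 > 1` and `M ∈ ℝ^{n×m}`.
(i) `M` is `Λ_m`-linearly independent iff for every `w ∈ ℝ^{m-1}` with `‖w‖ = 1` the two
vectors `M(1,-w)` and `M(1,w)` are positively linearly independent.
(ii) `M` is injective iff for every `w ∈ ℝ^{m-1}` with `‖w‖ = 1` the two vectors `M(1,-w)`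
and `M(1,w)` are linearly independent. -/
theorem stmt1 {n p : ℕ} (hp : 1 ≤ p) (M : Matrix (Fin n) (Fin (p + 1)) ℝ) :
    ((∀ v : Fin (p + 1) → ℝ, ‖hatPart v‖ ≤ v 0 → M.mulVec v = 0 → v = 0) ↔
      ∀ w : EuclideanSpace ℝ (Fin p), ‖w‖ = 1 →
        ∀ a b : ℝ, 0 ≤ a → 0 ≤ b →
          a • M.mulVec (consVec 1 (-w)) + b • M.mulVec (consVec 1 w) = 0 →
          a = 0 ∧ b = 0) ∧
    (Function.Injective M.mulVec ↔
      ∀ w : EuclideanSpace ℝ (Fin p), ‖w‖ = 1 →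
        ∀ a b : ℝ,
          a • M.mulVec (consVec 1 (-w)) + b • M.mulVec (consVec 1 w) = 0 →
          a = 0 ∧ b = 0) := by
  constructor
  · constructor
    · -- Λ-LI → condition
      intro h w hw a b ha hb hab
      set v : Fin (p + 1) → ℝ := a • consVec 1 (-w) + b • consVec 1 w with hv
      have hMv : M.mulVec v = 0 := by rw [hv, mulVec_comb, hab]
      have hv0 : v 0 = a + b := comb_apply_zero w a b
      have hhat : ∀ i, hatPart v i = (b - a) * w i := fun i => comb_apply_succ w a b i
      have hhat' : hatPart v = (b - a) • w := by
        ext i; rw [hhat]; simp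
      have hnorm : ‖hatPart v‖ = |b - a| := by
        rw [hhat', norm_smul, hw, Real.norm_eq_abs, mul_one]
      have hle : ‖hatPart v‖ ≤ v 0 := by
        rw [hnorm, hv0]
        exact abs_le.2 ⟨by linarith, by linarith⟩
      have hz := h v hle hMv
      have h0 : a + b = 0 := by rw [← hv0, hz]; rfl
      constructor <;> linarith
    · -- condition → Λ-LI
      intro h v hle hMv
      obtain ⟨w, hw, hdec⟩ := exists_decomp hp v
      have hr : (0:ℝ) ≤ ‖hatPart v‖ := norm_nonneg _
      have hab := h w hw ((v 0 - ‖hatPart v‖) / 2) ((v 0 + ‖hatPart v‖) / 2)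
        (by linarith) (by linarith) (by rw [← mulVec_comb, hdec, hMv])
      have h1 : v 0 = 0 := by linarith [hab.1, hab.2]
      have h2 : ‖hatPart v‖ = 0 := by linarith [hab.1, hab.2]
      have h3 : hatPart v = 0 := norm_eq_zero.mp h2
      funext j
      refine Fin.cases ?_ (fun i => ?_) j
      · exact h1
      · simpa [hatPart] using congrArg (fun x : EuclideanSpace ℝ (Fin p) => x i) h3
  · constructor
    · -- injective → condition
      intro h w hw a b hab
      set v : Fin (p + 1) → ℝ := a • consVec 1 (-w) + b • consVec 1 w with hv
      have hMv : M.mulVec v = M.mulVec 0 := by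
        rw [hv, mulVec_comb, hab, Matrix.mulVec_zero]
      have hz : v = 0 := h hMv
      have h0 : a + b = 0 := by
        have := comb_apply_zero w a b
        rw [← hv] at this; rw [hz] at this; simpa using this.symm
      have hwne : w ≠ 0 := by intro hc; rw [hc, norm_zero] at hw; norm_num at hw
      obtain ⟨i, hi⟩ : ∃ i, w i ≠ 0 := by
        by_contra hc
        push_neg at hc
        exact hwne (PiLp.ext (by simpa using hc))
      have h1 : (b - a) * w i = 0 := by
        have := comb_apply_succ w a b i
        rw [← hv] at this; rw [hz] at this; simpa using this.symm
      have h2 : b - a = 0 := by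
        rcases mul_eq_zero.mp h1 with h' | h'
        · exact h'
        · exact absurd h' hi
      constructor <;> linarith
    · -- condition → injective
      intro h
      have hker : ∀ v : Fin (p + 1) → ℝ, M.mulVec v = 0 → v = 0 := by
        intro v hMv
        obtain ⟨w, hw, hdec⟩ := exists_decomp hp v
        have hab := h w hw ((v 0 - ‖hatPart v‖) / 2) ((v 0 + ‖hatPart v‖) / 2)
          (by rw [← mulVec_comb, hdec, hMv])
        have h1 : v 0 = 0 := by linarith [hab.1, hab.2]
        have h2 : ‖hatPart v‖ = 0 := by linarith [hab.1, hab.2]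
        have h3 : hatPart v = 0 := norm_eq_zero.mp h2
        funext j
        refine Fin.cases ?_ (fun i => ?_) j
        · exact h1
        · simpa [hatPart] using congrArg (fun x : EuclideanSpace ℝ (Fin p) => x i) h3
      intro x y hxy
      have : M.mulVec (x - y) = 0 := by
        rw [Matrix.mulVec_sub, hxy, sub_self]
      have := hker _ this
      exact sub_eq_zero.mp this
end
end

section
/- Let x̄ ∈ F be a feasible point of NSOCP. Nondegeneracy holds at x̄ if, and only if, for every choice of unit vectors w̄_j ∈ ℝ^{m_j−1}, j ∈ I_0(x̄), the indexed family of vectors {Dg_j(x̄)ᵀ(1, −ĝ_j(x̄)/‖ĝ_j(x̄)‖)}_{j∈I_B(x̄)} ∪ {Dg_j(x̄)ᵀ(1, −w̄_j)}_{j∈I_0(x̄)} ∪ {Dg_j(x̄)ᵀ(1, w̄_j)}_{j∈I_0(x̄)} is linearly independent. -/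
open Filter Topology

noncomputable section

/-- Euclidean space `ℝ^k`. -/
abbrev Evec (k : ℕ) : Type := EuclideanSpace ℝ (Fin k)

/-- Membership of `y = (y₀, ŷ) ∈ ℝ × ℝ^p` in the second-order (Lorentz) cone `Λ_{1+p}`. -/
def inSOC {p : ℕ} (y : ℝ × Evec p) : Prop := ‖y.2‖ ≤ y.1

/-- Normalization `v / ‖v‖`. -/
def unitv {p : ℕ} (v : Evec p) : Evec p := ‖v‖⁻¹ • v

/-- The transposed Jacobian `Dg(x)ᵀ u` of `g = (g0, gh) : ℝ^n → ℝ × ℝ^p` at `x`,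
applied to `u = (u₀, û) ∈ ℝ × ℝ^p`. -/
def dgT {n p : ℕ} (g0 : Evec n → ℝ) (gh : Evec n → Evec p) (x : Evec n)
    (u : ℝ × Evec p) : Evec n :=
  u.1 • gradient g0 x + ∑ i, u.2 i • gradient (fun y => gh y i) x

/-- Euclidean inner product on `ℝ × ℝ^p`. -/
def pairInner {p : ℕ} (u v : ℝ × Evec p) : ℝ := u.1 * v.1 + (inner ℝ u.2 v.2 : ℝ)

/-- Squared Euclidean norm on `ℝ × ℝ^p`. -/
def pairSq {p : ℕ} (y : ℝ × Evec p) : ℝ := y.1 ^ 2 + ‖y.2‖ ^ 2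

/-- The Euclidean orthogonal projection onto the second-order cone
(expressed through the spectral decomposition). -/
def projSOC {p : ℕ} (y : ℝ × Evec p) : ℝ × Evec p :=
  ((max (y.1 - ‖y.2‖) 0 + max (y.1 + ‖y.2‖) 0) / 2,
    ((max (y.1 + ‖y.2‖) 0 - max (y.1 - ‖y.2‖) 0) / (2 * ‖y.2‖)) • y.2)

/-- `j ∈ I₀(x)`, i.e. `g_j(x) = 0`. -/
def memI0 {n q : ℕ} {m : Fin q → ℕ} (g0 : Fin q → Evec n → ℝ)
    (gh : (j : Fin q) → Evec n → Evec (m j)) (x : Evec n) (j : Fin q) : Prop :=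
  g0 j x = 0 ∧ gh j x = 0

/-- `j ∈ I_B(x)`, i.e. `g_j(x) ≠ 0` and `g_{j,0}(x) = ‖ĝ_j(x)‖`. -/
def memIB {n q : ℕ} {m : Fin q → ℕ} (g0 : Fin q → Evec n → ℝ)
    (gh : (j : Fin q) → Evec n → Evec (m j)) (x : Evec n) (j : Fin q) : Prop :=
  ¬ (g0 j x = 0 ∧ gh j x = 0) ∧ g0 j x = ‖gh j x‖

/-- The linear combination, with coefficients `η, a, b`, of the family
`D_{J_B,J_-,J_+}(x, w)`: the vectors `Dg_j(x)ᵀ(1, -ĝ_j(x)/‖ĝ_j(x)‖)` (coefficients `η j`),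
`Dg_j(x)ᵀ(1, -w j)` (coefficients `a j`) and `Dg_j(x)ᵀ(1, w j)` (coefficients `b j`). -/
def famComb {n q : ℕ} {m : Fin q → ℕ} (g0 : Fin q → Evec n → ℝ)
    (gh : (j : Fin q) → Evec n → Evec (m j)) (x : Evec n)
    (w : (j : Fin q) → Evec (m j)) (η a b : Fin q → ℝ) : Evec n :=
  ∑ j, (η j • dgT (g0 j) (gh j) x (1, -unitv (gh j x))
      + a j • dgT (g0 j) (gh j) x (1, -(w j))
      + b j • dgT (g0 j) (gh j) x (1, w j))

/-- The family `D_{J_B,J_-,J_+}(x, w)` is linearly dependent. -/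
def linDepD {n q : ℕ} {m : Fin q → ℕ} (g0 : Fin q → Evec n → ℝ)
    (gh : (j : Fin q) → Evec n → Evec (m j)) (JB Jm Jp : Fin q → Prop)
    (x : Evec n) (w : (j : Fin q) → Evec (m j)) : Prop :=
  ∃ η a b : Fin q → ℝ,
    (∀ j, ¬ JB j → η j = 0) ∧ (∀ j, ¬ Jm j → a j = 0) ∧ (∀ j, ¬ Jp j → b j = 0) ∧
    ¬ (∀ j, η j = 0 ∧ a j = 0 ∧ b j = 0) ∧
    famComb g0 gh x w η a b = 0

/-- The family `D_{J_B,J_-,J_+}(x, w)` is positively linearly dependent. -/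
def posLinDepD {n q : ℕ} {m : Fin q → ℕ} (g0 : Fin q → Evec n → ℝ)
    (gh : (j : Fin q) → Evec n → Evec (m j)) (JB Jm Jp : Fin q → Prop)
    (x : Evec n) (w : (j : Fin q) → Evec (m j)) : Prop :=
  ∃ η a b : Fin q → ℝ,
    (∀ j, 0 ≤ η j) ∧ (∀ j, 0 ≤ a j) ∧ (∀ j, 0 ≤ b j) ∧
    (∀ j, ¬ JB j → η j = 0) ∧ (∀ j, ¬ Jm j → a j = 0) ∧ (∀ j, ¬ Jp j → b j = 0) ∧
    ¬ (∀ j, η j = 0 ∧ a j = 0 ∧ b j = 0) ∧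
    famComb g0 gh x w η a b = 0

/-- The full family `{Dg_j(x)ᵀ u₁(g_j(x))}_{j ∈ I_B(x)} ∪
`{Dg_j(x)ᵀ(1,-w j), Dg_j(x)ᵀ(1,w j)}_{j ∈ I₀(x)}` is linearly independent. -/
def famLinIndep {n q : ℕ} {m : Fin q → ℕ} (g0 : Fin q → Evec n → ℝ)
    (gh : (j : Fin q) → Evec n → Evec (m j)) (x : Evec n)
    (w : (j : Fin q) → Evec (m j)) : Prop :=
  ∀ η a b : Fin q → ℝ,
    (∀ j, ¬ memIB g0 gh x j → η j = 0) →
    (∀ j, ¬ memI0 g0 gh x j → a j = 0 ∧ b j = 0) →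
    famComb g0 gh x w η a b = 0 →
    ∀ j, η j = 0 ∧ a j = 0 ∧ b j = 0

/-- The full family is positively linearly independent. -/
def famPosLinIndep {n q : ℕ} {m : Fin q → ℕ} (g0 : Fin q → Evec n → ℝ)
    (gh : (j : Fin q) → Evec n → Evec (m j)) (x : Evec n)
    (w : (j : Fin q) → Evec (m j)) : Prop :=
  ∀ η a b : Fin q → ℝ,
    (∀ j, 0 ≤ η j) → (∀ j, 0 ≤ a j) → (∀ j, 0 ≤ b j) →
    (∀ j, ¬ memIB g0 gh x j → η j = 0) →
    (∀ j, ¬ memI0 g0 gh x j → a j = 0 ∧ b j = 0) →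
    famComb g0 gh x w η a b = 0 →
    ∀ j, η j = 0 ∧ a j = 0 ∧ b j = 0

/-- An admissible choice, along the (perturbed) sequence `x k + Δ`, of eigenvector
parameters `w k j` (for `k ∈ I`, `j ∈ I₀(xb)`) together with their limits `wb j`. -/
def eigParams {n q : ℕ} {m : Fin q → ℕ} (g0 : Fin q → Evec n → ℝ)
    (gh : (j : Fin q) → Evec n → Evec (m j)) (xb : Evec n) (x : ℕ → Evec n)
    (Δ : ℕ → (j : Fin q) → ℝ × Evec (m j)) (I : Set ℕ)
    (w : ℕ → (j : Fin q) → Evec (m j)) (wb : (j : Fin q) → Evec (m j)) : Prop :=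
  (∀ k ∈ I, ∀ j, memI0 g0 gh xb j → ‖w k j‖ = 1 ∧
      (gh j (x k) + (Δ k j).2 ≠ 0 → w k j = unitv (gh j (x k) + (Δ k j).2))) ∧
  (∀ j, memI0 g0 gh xb j → ‖wb j‖ = 1 ∧
      Tendsto (fun k => w k j) (atTop ⊓ 𝓟 I) (𝓝 (wb j)))

/-- Weak-nondegeneracy at `xb`. -/
def weakNondeg {n q : ℕ} {m : Fin q → ℕ} (g0 : Fin q → Evec n → ℝ)
    (gh : (j : Fin q) → Evec n → Evec (m j)) (xb : Evec n) : Prop :=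
  ∀ x : ℕ → Evec n, Tendsto x atTop (𝓝 xb) →
    ∃ (I : Set ℕ) (w : ℕ → (j : Fin q) → Evec (m j)) (wb : (j : Fin q) → Evec (m j)),
      I.Infinite ∧ eigParams g0 gh xb x (fun _ _ => 0) I w wb ∧
      famLinIndep g0 gh xb wb

/-- Weak-Robinson's CQ at `xb`. -/
def weakRobinson {n q : ℕ} {m : Fin q → ℕ} (g0 : Fin q → Evec n → ℝ)
    (gh : (j : Fin q) → Evec n → Evec (m j)) (xb : Evec n) : Prop :=
  ∀ x : ℕ → Evec n, Tendsto x atTop (𝓝 xb) →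
    ∃ (I : Set ℕ) (w : ℕ → (j : Fin q) → Evec (m j)) (wb : (j : Fin q) → Evec (m j)),
      I.Infinite ∧ eigParams g0 gh xb x (fun _ _ => 0) I w wb ∧
      famPosLinIndep g0 gh xb wb

/-- Weak-CRCQ at `xb`. -/
def weakCRCQ {n q : ℕ} {m : Fin q → ℕ} (g0 : Fin q → Evec n → ℝ)
    (gh : (j : Fin q) → Evec n → Evec (m j)) (xb : Evec n) : Prop :=
  ∀ x : ℕ → Evec n, Tendsto x atTop (𝓝 xb) →
    ∃ (I : Set ℕ) (w : ℕ → (j : Fin q) → Evec (m j)) (wb : (j : Fin q) → Evec (m j)),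
      I.Infinite ∧ eigParams g0 gh xb x (fun _ _ => 0) I w wb ∧
      ∀ JB Jm Jp : Fin q → Prop,
        (∀ j, JB j → memIB g0 gh xb j) → (∀ j, Jm j → memI0 g0 gh xb j) →
        (∀ j, Jp j → memI0 g0 gh xb j) →
        linDepD g0 gh JB Jm Jp xb wb →
        ∀ᶠ k in atTop ⊓ 𝓟 I, linDepD g0 gh JB Jm Jp (x k) (w k)

/-- Weak-CPLD at `xb`. -/
def weakCPLD {n q : ℕ} {m : Fin q → ℕ} (g0 : Fin q → Evec n → ℝ)
    (gh : (j : Fin q) → Evec n → Evec (m j)) (xb : Evec n) : Prop :=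
  ∀ x : ℕ → Evec n, Tendsto x atTop (𝓝 xb) →
    ∃ (I : Set ℕ) (w : ℕ → (j : Fin q) → Evec (m j)) (wb : (j : Fin q) → Evec (m j)),
      I.Infinite ∧ eigParams g0 gh xb x (fun _ _ => 0) I w wb ∧
      ∀ JB Jm Jp : Fin q → Prop,
        (∀ j, JB j → memIB g0 gh xb j) → (∀ j, Jm j → memI0 g0 gh xb j) →
        (∀ j, Jp j → memI0 g0 gh xb j) →
        posLinDepD g0 gh JB Jm Jp xb wb →
        ∀ᶠ k in atTop ⊓ 𝓟 I, linDepD g0 gh JB Jm Jp (x k) (w k)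

/-- Seq-CRCQ at `xb`. -/
def seqCRCQ {n q : ℕ} {m : Fin q → ℕ} (g0 : Fin q → Evec n → ℝ)
    (gh : (j : Fin q) → Evec n → Evec (m j)) (xb : Evec n) : Prop :=
  ∀ (x : ℕ → Evec n) (Δ : ℕ → (j : Fin q) → ℝ × Evec (m j)),
    Tendsto x atTop (𝓝 xb) →
    (∀ j, memI0 g0 gh xb j ∨ memIB g0 gh xb j → Tendsto (fun k => Δ k j) atTop (𝓝 0)) →
    ∃ (I : Set ℕ) (w : ℕ → (j : Fin q) → Evec (m j)) (wb : (j : Fin q) → Evec (m j)),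
      I.Infinite ∧ eigParams g0 gh xb x Δ I w wb ∧
      ∀ JB Jm Jp : Fin q → Prop,
        (∀ j, JB j → memIB g0 gh xb j) → (∀ j, Jm j → memI0 g0 gh xb j) →
        (∀ j, Jp j → memI0 g0 gh xb j) →
        linDepD g0 gh JB Jm Jp xb wb →
        ∀ᶠ k in atTop ⊓ 𝓟 I, linDepD g0 gh JB Jm Jp (x k) (w k)

/-- Seq-CPLD at `xb`. -/
def seqCPLD {n q : ℕ} {m : Fin q → ℕ} (g0 : Fin q → Evec n → ℝ)
    (gh : (j : Fin q) → Evec n → Evec (m j)) (xb : Evec n) : Prop :=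
  ∀ (x : ℕ → Evec n) (Δ : ℕ → (j : Fin q) → ℝ × Evec (m j)),
    Tendsto x atTop (𝓝 xb) →
    (∀ j, memI0 g0 gh xb j ∨ memIB g0 gh xb j → Tendsto (fun k => Δ k j) atTop (𝓝 0)) →
    ∃ (I : Set ℕ) (w : ℕ → (j : Fin q) → Evec (m j)) (wb : (j : Fin q) → Evec (m j)),
      I.Infinite ∧ eigParams g0 gh xb x Δ I w wb ∧
      ∀ JB Jm Jp : Fin q → Prop,
        (∀ j, JB j → memIB g0 gh xb j) → (∀ j, Jm j → memI0 g0 gh xb j) →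
        (∀ j, Jp j → memI0 g0 gh xb j) →
        posLinDepD g0 gh JB Jm Jp xb wb →
        ∀ᶠ k in atTop ⊓ 𝓟 I, linDepD g0 gh JB Jm Jp (x k) (w k)

/-- The linear combination appearing in the definitions of nondegeneracy and
Robinson's CQ: `Σ_{j} (η j • Dg_j(x)ᵀ(g_{j,0}(x), -ĝ_j(x)) + Dg_j(x)ᵀ (y j))`. -/
def ndgComb {n q : ℕ} {m : Fin q → ℕ} (g0 : Fin q → Evec n → ℝ)
    (gh : (j : Fin q) → Evec n → Evec (m j)) (x : Evec n)
    (η : Fin q → ℝ) (y : (j : Fin q) → ℝ × Evec (m j)) : Evec n :=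
  ∑ j, (η j • dgT (g0 j) (gh j) x (g0 j x, -(gh j x)) + dgT (g0 j) (gh j) x (y j))

/-- Nondegeneracy at `xb`. -/
def Nondegenerate {n q : ℕ} {m : Fin q → ℕ} (g0 : Fin q → Evec n → ℝ)
    (gh : (j : Fin q) → Evec n → Evec (m j)) (xb : Evec n) : Prop :=
  ∀ (η : Fin q → ℝ) (y : (j : Fin q) → ℝ × Evec (m j)),
    (∀ j, ¬ memIB g0 gh xb j → η j = 0) →
    (∀ j, ¬ memI0 g0 gh xb j → y j = 0) →
    ndgComb g0 gh xb η y = 0 →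
    (∀ j, η j = 0) ∧ (∀ j, y j = 0)

/-- Robinson's CQ at `xb`. -/
def RobinsonCQ {n q : ℕ} {m : Fin q → ℕ} (g0 : Fin q → Evec n → ℝ)
    (gh : (j : Fin q) → Evec n → Evec (m j)) (xb : Evec n) : Prop :=
  ∀ (η : Fin q → ℝ) (y : (j : Fin q) → ℝ × Evec (m j)),
    (∀ j, 0 ≤ η j) → (∀ j, inSOC (y j)) →
    (∀ j, ¬ memIB g0 gh xb j → η j = 0) →
    (∀ j, ¬ memI0 g0 gh xb j → y j = 0) →
    ndgComb g0 gh xb η y = 0 →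
    (∀ j, η j = 0) ∧ (∀ j, y j = 0)

/-- The KKT conditions at `xb` for objective `f`. -/
def isKKT {n q : ℕ} {m : Fin q → ℕ} (f : Evec n → ℝ) (g0 : Fin q → Evec n → ℝ)
    (gh : (j : Fin q) → Evec n → Evec (m j)) (xb : Evec n) : Prop :=
  ∃ μ : (j : Fin q) → ℝ × Evec (m j),
    (∀ j, inSOC (μ j)) ∧
    gradient f xb = ∑ j, dgT (g0 j) (gh j) xb (μ j) ∧
    ∀ j, pairInner (μ j) (g0 j xb, gh j xb) = 0

/-- The metric subregularity CQ (MSCQ) at `xb`, with Euclidean distances. -/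
def MSCQat {n q : ℕ} {m : Fin q → ℕ} (g0 : Fin q → Evec n → ℝ)
    (gh : (j : Fin q) → Evec n → Evec (m j)) (xb : Evec n) : Prop :=
  ∃ γ > (0:ℝ), ∃ ε > (0:ℝ), ∀ x : Evec n, ‖x - xb‖ < ε →
    Metric.infDist x {z : Evec n | ∀ j, ‖gh j z‖ ≤ g0 j z} ≤
      γ * sInf {d : ℝ | ∃ z : (j : Fin q) → ℝ × Evec (m j),
        (∀ j, inSOC (z j)) ∧
        d = Real.sqrt (∑ j, ((g0 j x - (z j).1) ^ 2 + ‖gh j x - (z j).2‖ ^ 2))}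
set_option maxRecDepth 8000

lemma dgT_smul' {n p : ℕ} (g0 : Evec n → ℝ) (gh : Evec n → Evec p) (x : Evec n)
    (c : ℝ) (u : ℝ × Evec p) : dgT g0 gh x (c • u) = c • dgT g0 gh x u := by
  have h1 : (c • u).1 = c * u.1 := rfl
  have h2 : ∀ i, (c • u).2 i = c * u.2 i := fun i => rfl
  simp only [dgT, h1, h2, mul_smul, smul_add, Finset.smul_sum]

lemma dgT_add' {n p : ℕ} (g0 : Evec n → ℝ) (gh : Evec n → Evec p) (x : Evec n)
    (u v : ℝ × Evec p) : dgT g0 gh x (u + v) = dgT g0 gh x u + dgT g0 gh x v := by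
  have h1 : (u + v).1 = u.1 + v.1 := rfl
  have h2 : ∀ i, (u + v).2 i = u.2 i + v.2 i := fun i => rfl
  simp only [dgT, h1, h2, add_smul, Finset.sum_add_distrib]
  abel

lemma prodExt' {p : ℕ} {u v : ℝ × Evec p} (h1 : u.1 = v.1) (h2 : u.2 = v.2) : u = v :=
  Prod.ext h1 h2

lemma dgT_pair' {n p : ℕ} (g0 : Evec n → ℝ) (gh : Evec n → Evec p) (x : Evec n)
    (a b : ℝ) (w : Evec p) :
    dgT g0 gh x (a + b, (b - a) • w)
      = a • dgT g0 gh x (1, -w) + b • dgT g0 gh x (1, w) := by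
  have harg : (a + b, (b - a) • w) = a • ((1:ℝ), -w) + b • ((1:ℝ), w) := by
    refine prodExt' ?_ ?_
    · show a + b = a * 1 + b * 1; ring
    · show (b - a) • w = a • (-w) + b • w
      rw [sub_smul, smul_neg]; abel
  rw [harg, dgT_add', dgT_smul', dgT_smul']

lemma dgT_IB' {n p : ℕ} (g0 : Evec n → ℝ) (gh : Evec n → Evec p) (x : Evec n)
    (hne : gh x ≠ 0) (heq : g0 x = ‖gh x‖) :
    dgT g0 gh x (g0 x, -(gh x)) = (g0 x) • dgT g0 gh x (1, -unitv (gh x)) := by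
  have harg : (g0 x, -(gh x)) = g0 x • ((1:ℝ), -unitv (gh x)) := by
    refine prodExt' ?_ ?_
    · show g0 x = g0 x * 1; ring
    · show -(gh x) = g0 x • (-unitv (gh x))
      rw [unitv, smul_neg, smul_smul, heq, mul_inv_cancel₀ (norm_ne_zero_iff.mpr hne), one_smul]
  rw [harg, dgT_smul']

lemma unitv_norm' {p : ℕ} {v : Evec p} (hv : v ≠ 0) : ‖unitv v‖ = 1 := by
  rw [unitv, norm_smul, norm_inv, norm_norm, inv_mul_cancel₀ (norm_ne_zero_iff.mpr hv)]

/-- Nondegeneracy holds at a feasible `xb` iff for every choice of unit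
vectors `w j ∈ ℝ^{m_j - 1}`, `j ∈ I₀(xb)`, the family
`{Dg_j(xb)ᵀ(1, -ĝ_j(xb)/‖ĝ_j(xb)‖)}_{j ∈ I_B}` ∪ `{Dg_j(xb)ᵀ(1,-w j), Dg_j(xb)ᵀ(1,w j)}_{j ∈ I₀}`
is linearly independent.  (Here `m j` stands for `m_j - 1 ≥ 1`.) -/
theorem stmt2 {n q : ℕ} (m : Fin q → ℕ) (hm : ∀ j, 1 ≤ m j)
    (f : Evec n → ℝ) (hf : ContDiff ℝ 1 f)
    (g0 : Fin q → Evec n → ℝ) (gh : (j : Fin q) → Evec n → Evec (m j))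
    (hg : ∀ j, ContDiff ℝ 1 fun x => (g0 j x, gh j x))
    (xb : Evec n) (hxb : ∀ j, ‖gh j xb‖ ≤ g0 j xb) :
    Nondegenerate g0 gh xb ↔
      ∀ w : (j : Fin q) → Evec (m j), (∀ j, memI0 g0 gh xb j → ‖w j‖ = 1) →
        famLinIndep g0 gh xb w := by
  classical
  have hIBfact : ∀ j, memIB g0 gh xb j → gh j xb ≠ 0 ∧ 0 < g0 j xb := by
    intro j hj
    obtain ⟨h1, h2⟩ := hj
    have hne : gh j xb ≠ 0 := by
      intro h
      exact h1 ⟨by rw [h2, h, norm_zero], h⟩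
    exact ⟨hne, h2 ▸ norm_pos_iff.mpr hne⟩
  constructor
  · intro hN w hw η a b hη hab hcomb
    set η' : Fin q → ℝ := fun j => (g0 j xb)⁻¹ * η j with hη'def
    set y : (j : Fin q) → ℝ × Evec (m j) := fun j => (a j + b j, (b j - a j) • w j) with hydef
    have hterm : ∀ j,
        η' j • dgT (g0 j) (gh j) xb (g0 j xb, -(gh j xb)) + dgT (g0 j) (gh j) xb (y j)
        = η j • dgT (g0 j) (gh j) xb (1, -unitv (gh j xb))
          + a j • dgT (g0 j) (gh j) xb (1, -(w j))
          + b j • dgT (g0 j) (gh j) xb (1, w j) := by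
      intro j
      have h2 : dgT (g0 j) (gh j) xb (y j)
          = a j • dgT (g0 j) (gh j) xb (1, -(w j)) + b j • dgT (g0 j) (gh j) xb (1, w j) :=
        dgT_pair' _ _ _ _ _ _
      have h1 : η' j • dgT (g0 j) (gh j) xb (g0 j xb, -(gh j xb))
          = η j • dgT (g0 j) (gh j) xb (1, -unitv (gh j xb)) := by
        by_cases hIB : memIB g0 gh xb j
        · obtain ⟨hne, hpos⟩ := hIBfact j hIB
          rw [dgT_IB' _ _ _ hne hIB.2, smul_smul, hη'def]
          congr 1
          field_simp
        · rw [hη j hIB]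
          simp [hη'def, hη j hIB]
      rw [h1, h2, add_assoc]
    have hnd : ndgComb g0 gh xb η' y = 0 := by
      rw [ndgComb, ← hcomb, famComb]
      exact Finset.sum_congr rfl fun j _ => hterm j
    obtain ⟨hη0, hy0⟩ := hN η' y
      (fun j hj => by simp [hη'def, hη j hj])
      (fun j hj => by
        obtain ⟨ha, hb⟩ := hab j hj
        refine prodExt' ?_ ?_
        · show a j + b j = 0; rw [ha, hb, add_zero]
        · show (b j - a j) • w j = 0; rw [ha, hb, sub_zero, zero_smul])
      hnd
    intro j
    have hηj : η j = 0 := by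
      by_cases hIB : memIB g0 gh xb j
      · have := hη0 j
        have hpos := (hIBfact j hIB).2
        have hinv : (g0 j xb)⁻¹ ≠ 0 := inv_ne_zero (ne_of_gt hpos)
        exact (mul_eq_zero.mp this).resolve_left hinv
      · exact hη j hIB
    refine ⟨hηj, ?_⟩
    by_cases hI0 : memI0 g0 gh xb j
    · have h1 : a j + b j = 0 := congrArg Prod.fst (hy0 j)
      have h2 : (b j - a j) • w j = 0 := congrArg Prod.snd (hy0 j)
      have hwne : w j ≠ 0 := by
        intro h
        have := hw j hI0
        rw [h, norm_zero] at this
        norm_num at this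
      have h3 : b j - a j = 0 := (smul_eq_zero.mp h2).resolve_right hwne
      constructor <;> linarith
    · exact hab j hI0
  · intro hF η y hη hy hcomb
    set w : (j : Fin q) → Evec (m j) := fun j =>
      if h : (y j).2 = 0 then EuclideanSpace.single ⟨0, hm j⟩ (1:ℝ) else unitv (y j).2 with hwdef
    set a : Fin q → ℝ := fun j => ((y j).1 - ‖(y j).2‖) / 2 with hadef
    set b : Fin q → ℝ := fun j => ((y j).1 + ‖(y j).2‖) / 2 with hbdef
    set η' : Fin q → ℝ := fun j => η j * g0 j xb with hη'def
    have hwunit : ∀ j, ‖w j‖ = 1 := by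
      intro j
      rw [hwdef]
      by_cases h : (y j).2 = 0
      · simp only [h, dif_pos]
        rw [EuclideanSpace.norm_single]; norm_num
      · simp only [h, dif_neg, not_false_iff]
        exact unitv_norm' h
    have hwy : ∀ j, ‖(y j).2‖ • w j = (y j).2 := by
      intro j
      rw [hwdef]
      by_cases h : (y j).2 = 0
      · simp only [h, dif_pos, norm_zero, zero_smul]
      · simp only [h, dif_neg, not_false_iff]
        rw [unitv, smul_smul, mul_inv_cancel₀ (norm_ne_zero_iff.mpr h), one_smul]
    have hyeq : ∀ j, y j = (a j + b j, (b j - a j) • w j) := by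
      intro j
      refine prodExt' ?_ ?_
      · show (y j).1 = a j + b j; rw [hadef, hbdef]; ring
      · show (y j).2 = (b j - a j) • w j
        have : b j - a j = ‖(y j).2‖ := by rw [hadef, hbdef]; ring
        rw [this, hwy]
    have hterm : ∀ j,
        η' j • dgT (g0 j) (gh j) xb (1, -unitv (gh j xb))
          + a j • dgT (g0 j) (gh j) xb (1, -(w j))
          + b j • dgT (g0 j) (gh j) xb (1, w j)
        = η j • dgT (g0 j) (gh j) xb (g0 j xb, -(gh j xb)) + dgT (g0 j) (gh j) xb (y j) := by
      intro j
      have h2 : dgT (g0 j) (gh j) xb (y j)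
          = a j • dgT (g0 j) (gh j) xb (1, -(w j)) + b j • dgT (g0 j) (gh j) xb (1, w j) := by
        rw [hyeq j]; exact dgT_pair' _ _ _ _ _ _
      have h1 : η' j • dgT (g0 j) (gh j) xb (1, -unitv (gh j xb))
          = η j • dgT (g0 j) (gh j) xb (g0 j xb, -(gh j xb)) := by
        by_cases hIB : memIB g0 gh xb j
        · obtain ⟨hne, hpos⟩ := hIBfact j hIB
          rw [dgT_IB' _ _ _ hne hIB.2, smul_smul, hη'def]
        · rw [hη j hIB]
          simp [hη'def, hη j hIB]
      rw [h1, h2, add_assoc]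
    have hfam : famComb g0 gh xb w η' a b = 0 := by
      rw [famComb, ← hcomb, ndgComb]
      exact Finset.sum_congr rfl fun j _ => hterm j
    have hall := hF w (fun j _ => hwunit j) η' a b
      (fun j hj => by simp [hη'def, hη j hj])
      (fun j hj => by
        have hyj := hy j hj
        have h1 : (y j).1 = 0 := by rw [hyj]; rfl
        have h2 : (y j).2 = 0 := by rw [hyj]; rfl
        constructor
        · rw [hadef]; simp [h1, h2]
        · rw [hbdef]; simp [h1, h2])
      hfam
    constructor
    · intro j
      by_cases hIB : memIB g0 gh xb j
      · have := (hall j).1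
        have hpos := (hIBfact j hIB).2
        rw [hη'def] at this
        exact (mul_eq_zero.mp this).resolve_right (ne_of_gt hpos)
      · exact hη j hIB
    · intro j
      obtain ⟨_, ha0, hb0⟩ := hall j
      have h1 : (y j).1 = 0 := by
        have : a j + b j = (y j).1 := by rw [hadef, hbdef]; ring
        rw [← this, ha0, hb0, add_zero]
      have h2 : ‖(y j).2‖ = 0 := by
        have : b j - a j = ‖(y j).2‖ := by rw [hadef, hbdef]; ring
        rw [← this, ha0, hb0, sub_zero]
      refine prodExt' h1 (norm_eq_zero.mp h2)
end
end

section
/- Let x̄ ∈ F be a feasible point of NSOCP. If weak-Robinson's CQ holds at x̄, then the indexed family of vectors {∇g_{j,0}(x̄)}_{j∈I_0(x̄)} ∪ {Dg_j(x̄)ᵀ(1, −ĝ_j(x̄)/‖ĝ_j(x̄)‖)}_{j∈I_B(x̄)} is positively linearly independent. -/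
open Filter Topology

noncomputable section

theorem dgT_one_neg_add_dgT_one {n p : ℕ} (g0 : Evec n → ℝ) (gh : Evec n → Evec p)
    (x : Evec n) (w : Evec p) :
    dgT g0 gh x (1, -w) + dgT g0 gh x (1, w) = (2 : ℝ) • gradient g0 x := by
  simp only [dgT, PiLp.neg_apply, neg_smul, Finset.sum_neg_distrib]
  module

theorem famComb_half_half {n q : ℕ} {m : Fin q → ℕ} (g0 : Fin q → Evec n → ℝ)
    (gh : (j : Fin q) → Evec n → Evec (m j)) (x : Evec n)
    (w : (j : Fin q) → Evec (m j)) (c η : Fin q → ℝ) :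
    famComb g0 gh x w η (fun j => c j / 2) (fun j => c j / 2)
      = ∑ j, (c j • gradient (g0 j) x + η j • dgT (g0 j) (gh j) x (1, -unitv (gh j x))) := by
  refine Finset.sum_congr rfl fun j _ => ?_
  rw [add_assoc, ← smul_add, dgT_one_neg_add_dgT_one]
  module

/- `∇g_{j,0} = (Dg_jᵀ(1, -w) + Dg_jᵀ(1, w)) / 2` for every `w`, so a positive dependence of the
gradient family is one of the weak-Robinson family with the weight `c j` split evenly. -/
theorem gradient_posLinIndep_of_famPosLinIndep {n q : ℕ} {m : Fin q → ℕ}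
    {g0 : Fin q → Evec n → ℝ} {gh : (j : Fin q) → Evec n → Evec (m j)} {x : Evec n}
    {w : (j : Fin q) → Evec (m j)} (hw : famPosLinIndep g0 gh x w) (c η : Fin q → ℝ)
    (hc : ∀ j, 0 ≤ c j) (hη : ∀ j, 0 ≤ η j)
    (hc0 : ∀ j, ¬ memI0 g0 gh x j → c j = 0) (hηB : ∀ j, ¬ memIB g0 gh x j → η j = 0)
    (hsum : ∑ j, (c j • gradient (g0 j) x
        + η j • dgT (g0 j) (gh j) x (1, -unitv (gh j x))) = 0) :
    ∀ j, c j = 0 ∧ η j = 0 := by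
  have hhalf : ∀ j, 0 ≤ c j / 2 := fun j => by linarith [hc j]
  have hzero := hw η (fun j => c j / 2) (fun j => c j / 2) hη hhalf hhalf hηB
    (fun j hj => by simp [hc0 j hj]) (by rw [famComb_half_half, hsum])
  intro j
  obtain ⟨hηj, hcj, -⟩ := hzero j
  exact ⟨by linarith, hηj⟩

theorem stmt5_general {n q : ℕ} (m : Fin q → ℕ)
    (g0 : Fin q → Evec n → ℝ) (gh : (j : Fin q) → Evec n → Evec (m j))
    (xb : Evec n)
    (hwr : weakRobinson g0 gh xb) :
    ∀ c η : Fin q → ℝ, (∀ j, 0 ≤ c j) → (∀ j, 0 ≤ η j) →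
      (∀ j, ¬ memI0 g0 gh xb j → c j = 0) →
      (∀ j, ¬ memIB g0 gh xb j → η j = 0) →
      ∑ j, (c j • gradient (g0 j) xb
          + η j • dgT (g0 j) (gh j) xb (1, -unitv (gh j xb))) = 0 →
      ∀ j, c j = 0 ∧ η j = 0 := by
  obtain ⟨-, -, wb, -, -, hwb⟩ := hwr (fun _ => xb) tendsto_const_nhds
  exact gradient_posLinIndep_of_famPosLinIndep hwb

/-- If weak-Robinson's CQ holds at a feasible `xb`, then the family
`{∇g_{j,0}(xb)}_{j ∈ I₀(xb)} ∪ {Dg_j(xb)ᵀ(1, -ĝ_j(xb)/‖ĝ_j(xb)‖)}_{j ∈ I_B(xb)}`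
is positively linearly independent. -/
theorem stmt5 {n q : ℕ} (m : Fin q → ℕ) (hm : ∀ j, 1 ≤ m j)
    (f : Evec n → ℝ) (hf : ContDiff ℝ 1 f)
    (g0 : Fin q → Evec n → ℝ) (gh : (j : Fin q) → Evec n → Evec (m j))
    (hg : ∀ j, ContDiff ℝ 1 fun x => (g0 j x, gh j x))
    (xb : Evec n) (hxb : ∀ j, ‖gh j xb‖ ≤ g0 j xb)
    (hwr : weakRobinson g0 gh xb) :
    ∀ c η : Fin q → ℝ, (∀ j, 0 ≤ c j) → (∀ j, 0 ≤ η j) →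
      (∀ j, ¬ memI0 g0 gh xb j → c j = 0) →
      (∀ j, ¬ memIB g0 gh xb j → η j = 0) →
      ∑ j, (c j • gradient (g0 j) xb
          + η j • dgT (g0 j) (gh j) xb (1, -unitv (gh j xb))) = 0 →
      ∀ j, c j = 0 ∧ η j = 0 :=
  stmt5_general m g0 gh xb hwr
end
end

section
/- Let x̄ ∈ F be a feasible point of NSOCP. If weak-nondegeneracy holds at x̄, then the indexed family of vectors {∇g_{j,0}(x̄)}_{j∈I_0(x̄)} ∪ {Dg_j(x̄)ᵀ(1, −ĝ_j(x̄)/‖ĝ_j(x̄)‖)}_{j∈I_B(x̄)} is linearly independent. -/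
open Filter Topology

noncomputable section

lemma dgT_pair_add {n p : ℕ} (g0 : Evec n → ℝ) (gh : Evec n → Evec p) (x : Evec n)
    (w : Evec p) :
    dgT g0 gh x (1, -w) + dgT g0 gh x (1, w) = (2:ℝ) • gradient g0 x := by
  simp only [dgT]
  have : ∀ i, (-w : Evec p) i = -(w i) := fun i => rfl
  simp [this, neg_smul, two_smul]
  abel

/-- If weak-nondegeneracy holds at a feasible `xb`, then the family
`{∇g_{j,0}(xb)}_{j ∈ I₀(xb)} ∪ {Dg_j(xb)ᵀ(1, -ĝ_j(xb)/‖ĝ_j(xb)‖)}_{j ∈ I_B(xb)}`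
is linearly independent. -/
theorem stmt6 {n q : ℕ} (m : Fin q → ℕ) (hm : ∀ j, 1 ≤ m j)
    (f : Evec n → ℝ) (hf : ContDiff ℝ 1 f)
    (g0 : Fin q → Evec n → ℝ) (gh : (j : Fin q) → Evec n → Evec (m j))
    (hg : ∀ j, ContDiff ℝ 1 fun x => (g0 j x, gh j x))
    (xb : Evec n) (hxb : ∀ j, ‖gh j xb‖ ≤ g0 j xb)
    (hwn : weakNondeg g0 gh xb) :
    ∀ c η : Fin q → ℝ,
      (∀ j, ¬ memI0 g0 gh xb j → c j = 0) →
      (∀ j, ¬ memIB g0 gh xb j → η j = 0) →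
      ∑ j, (c j • gradient (g0 j) xb
          + η j • dgT (g0 j) (gh j) xb (1, -unitv (gh j xb))) = 0 →
      ∀ j, c j = 0 ∧ η j = 0 := by
  intro c η hc hη hsum
  obtain ⟨I, w, wb, hinf, hep, hli⟩ := hwn (fun _ => xb) tendsto_const_nhds
  have key := hli η (fun j => c j / 2) (fun j => c j / 2) hη
    (fun j hj => by simp [hc j hj])
    (by
      have : famComb g0 gh xb wb η (fun j => c j / 2) (fun j => c j / 2)
          = ∑ j, (c j • gradient (g0 j) xb
            + η j • dgT (g0 j) (gh j) xb (1, -unitv (gh j xb))) := by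
        unfold famComb
        refine Finset.sum_congr rfl fun j _ => ?_
        have h := dgT_pair_add (g0 j) (gh j) xb (wb j)
        have : (c j / 2) • dgT (g0 j) (gh j) xb (1, -(wb j))
            + (c j / 2) • dgT (g0 j) (gh j) xb (1, wb j) = c j • gradient (g0 j) xb := by
          rw [← smul_add, h, smul_smul]
          ring_nf
        rw [add_assoc, this]
        abel
      rw [this, hsum])
  intro j
  obtain ⟨h1, h2, _⟩ := key j
  exact ⟨by linarith, h1⟩
end
end

section
/- Let x̄ ∈ F be a feasible point of NSOCP at which weak-Robinson's CQ holds. Then for each index ℓ ∈ {1,…,q}, the point x̄ satisfies Robinson's CQ for the isolated constraint g_ℓ(x) ∈ Λ_{m_ℓ}; explicitly: if g_ℓ(x̄) = 0, then there is no nonzero y ∈ Λ_{m_ℓ} with Dg_ℓ(x̄)ᵀ y = 0, and if g_ℓ(x̄) ≠ 0 with g_{ℓ,0}(x̄) = ‖ĝ_ℓ(x̄)‖, then Dg_ℓ(x̄)ᵀ(1, −ĝ_ℓ(x̄)/‖ĝ_ℓ(x̄)‖) ≠ 0. -/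
open Filter Topology

noncomputable section

lemma inner_gradient {k : ℕ} (f : Evec k → ℝ) (x d : Evec k) :
    (inner ℝ (gradient f x) d : ℝ) = fderiv ℝ f x d := by
  unfold gradient
  exact InnerProductSpace.toDual_symm_apply

lemma unitv_smul_pos {p : ℕ} {c : ℝ} (hc : 0 < c) (v : Evec p) : unitv (c • v) = unitv v := by
  unfold unitv
  rw [norm_smul, smul_smul]
  congr 1
  rw [Real.norm_eq_abs, abs_of_pos hc, mul_inv,
    mul_comm (c⁻¹) _, mul_assoc, inv_mul_cancel₀ hc.ne', mul_one]

def Bmap {n p : ℕ} (G : Fin p → Evec n) : Evec n →ₗ[ℝ] Evec p :=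
  (WithLp.linearEquiv 2 ℝ (Fin p → ℝ)).symm.toLinearMap.comp
    (LinearMap.pi fun i => ((innerSL ℝ (G i)).toLinearMap))

lemma Bmap_apply {n p : ℕ} (G : Fin p → Evec n) (d : Evec n) (i : Fin p) :
    Bmap G d i = (inner ℝ (G i) d : ℝ) := rfl

lemma orth_sum_zero {n p : ℕ} (G : Fin p → Evec n) (z : Evec p)
    (hz : ∀ d : Evec n, (∑ i, z i * (inner ℝ (G i) d : ℝ)) = 0) :
    ∑ i, z i • G i = 0 := by
  have h : (inner ℝ (∑ i, z i • G i) (∑ i, z i • G i) : ℝ) = 0 := by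
    rw [sum_inner]
    simpa [real_inner_smul_left, Finset.mul_sum, mul_assoc] using hz (∑ i, z i • G i)
  exact inner_self_eq_zero.mp h

lemma comb_zero {n p : ℕ} (G0 : Evec n) (G : Fin p → Evec n) (y0 a0 b0 : ℝ) (yh y2 w : Evec p)
    (hy0 : y0 ≠ 0) (hab : a0 + b0 = 1)
    (hy : y0 • G0 + ∑ i, yh i • G i = 0)
    (hz : ∑ i, yh i • G i = ∑ i, y2 i • G i)
    (hw : ∀ i, (b0 - a0) * w i = y0⁻¹ * y2 i) :
    a0 • ((1:ℝ) • G0 + ∑ i, (-w) i • G i) + b0 • ((1:ℝ) • G0 + ∑ i, w i • G i) = 0 := by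
  have h1 : ∀ i : Fin p, a0 • ((-w) i • G i) + b0 • (w i • G i) = (y0⁻¹ * y2 i) • G i := by
    intro i
    rw [← hw i, smul_smul, smul_smul, ← add_smul]
    congr 1
    have hni : (-w) i = -(w i) := rfl
    rw [hni]; ring
  calc a0 • ((1:ℝ) • G0 + ∑ i, (-w) i • G i) + b0 • ((1:ℝ) • G0 + ∑ i, w i • G i)
      = (a0 + b0) • G0 + ∑ i, (a0 • ((-w) i • G i) + b0 • (w i • G i)) := by
        rw [one_smul, smul_add, smul_add, Finset.smul_sum, Finset.smul_sum, add_smul,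
          Finset.sum_add_distrib]
        abel
    _ = G0 + ∑ i, (y0⁻¹ * y2 i) • G i := by
        rw [hab, one_smul]
        congr 1
        exact Finset.sum_congr rfl fun i _ => h1 i
    _ = G0 + y0⁻¹ • ∑ i, y2 i • G i := by
        rw [Finset.smul_sum]
        congr 1
        exact Finset.sum_congr rfl fun i _ => (smul_smul _ _ _).symm
    _ = 0 := by
        rw [← hz, eq_neg_of_add_eq_zero_right hy, smul_neg, smul_smul,
          inv_mul_cancel₀ hy0, one_smul, add_neg_cancel]

lemma infinite_neBot {I : Set ℕ} (hI : I.Infinite) : (atTop ⊓ 𝓟 I : Filter ℕ).NeBot := by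
  rw [← Filter.frequently_mem_iff_neBot, Nat.frequently_atTop_iff_infinite]
  exact hI

/-- If weak-Robinson's CQ holds at a feasible `xb`, then every isolated
constraint `g_ℓ(x) ∈ Λ_{m_ℓ}` satisfies Robinson's CQ at `xb`: if `g_ℓ(xb) = 0` then there
is no nonzero `y ∈ Λ_{m_ℓ}` with `Dg_ℓ(xb)ᵀ y = 0`, and if `g_ℓ(xb) ≠ 0` with
`g_{ℓ,0}(xb) = ‖ĝ_ℓ(xb)‖` then `Dg_ℓ(xb)ᵀ(1, -ĝ_ℓ(xb)/‖ĝ_ℓ(xb)‖) ≠ 0`. -/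
theorem stmt7 {n q : ℕ} (m : Fin q → ℕ) (hm : ∀ j, 1 ≤ m j)
    (f : Evec n → ℝ) (hf : ContDiff ℝ 1 f)
    (g0 : Fin q → Evec n → ℝ) (gh : (j : Fin q) → Evec n → Evec (m j))
    (hg : ∀ j, ContDiff ℝ 1 fun x => (g0 j x, gh j x))
    (xb : Evec n) (hxb : ∀ j, ‖gh j xb‖ ≤ g0 j xb)
    (hwr : weakRobinson g0 gh xb) :
    ∀ ℓ : Fin q,
      ((g0 ℓ xb = 0 ∧ gh ℓ xb = 0) →
        ∀ y : ℝ × Evec (m ℓ), inSOC y → dgT (g0 ℓ) (gh ℓ) xb y = 0 → y = 0) ∧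
      ((¬ (g0 ℓ xb = 0 ∧ gh ℓ xb = 0) ∧ g0 ℓ xb = ‖gh ℓ xb‖) →
        dgT (g0 ℓ) (gh ℓ) xb (1, -unitv (gh ℓ xb)) ≠ 0) := by
  intro ℓ
  have hgd : Differentiable ℝ (fun x => (g0 ℓ x, gh ℓ x)) := (hg ℓ).differentiable one_ne_zero
  have hdiff : Differentiable ℝ (gh ℓ) := hgd.snd
  constructor
  · rintro ⟨h00, hh0⟩ y hy hdy
    have hmem : memI0 g0 gh xb ℓ := ⟨h00, hh0⟩
    by_cases hy1 : y.1 = 0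
    · have h2 : y.2 = 0 := norm_le_zero_iff.mp (hy1 ▸ hy)
      exact Prod.ext hy1 h2
    · exfalso
      have hy1pos : 0 < y.1 := lt_of_le_of_ne (le_trans (norm_nonneg y.2) hy) (Ne.symm hy1)
      set G0 : Evec n := gradient (g0 ℓ) xb with hG0
      set G : Fin (m ℓ) → Evec n := fun i => gradient (fun z => gh ℓ z i) xb with hG
      rw [dgT] at hdy
      set K := LinearMap.range (Bmap G) with hKdef
      set y2 : Evec (m ℓ) := (K.orthogonalProjectionOnto y.2 : Evec (m ℓ)) with hy2def
      obtain ⟨d, hd⟩ : ∃ d, Bmap G d = y2 := LinearMap.mem_range.mp (K.orthogonalProjectionOnto y.2).2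
      have horth : y.2 - y2 ∈ Kᗮ := K.sub_starProjection_mem_orthogonal y.2
      have hzsum : ∑ i, y.2 i • G i = ∑ i, y2 i • G i := by
        have h0 : ∑ i, (y.2 - y2) i • G i = 0 := by
          apply orth_sum_zero
          intro d'
          have hmemK : Bmap G d' ∈ K := LinearMap.mem_range_self _ d'
          have horth' := (Submodule.mem_orthogonal K (y.2 - y2)).mp horth (Bmap G d') hmemK
          calc ∑ i, (y.2 - y2) i * (inner ℝ (G i) d' : ℝ)
              = (inner ℝ (y.2 - y2) (Bmap G d') : ℝ) := by
                rw [PiLp.inner_apply]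
                exact Finset.sum_congr rfl fun i _ => by
                  rw [Bmap_apply]; simp [RCLike.inner_apply]; ring
            _ = 0 := by rw [real_inner_comm]; exact horth'
        have h1 : ∑ i, (y.2 - y2) i • G i
            = (∑ i, y.2 i • G i) - ∑ i, y2 i • G i := by
          rw [← Finset.sum_sub_distrib]
          exact Finset.sum_congr rfl fun i _ => by
            have : (y.2 - y2) i = y.2 i - y2 i := rfl
            rw [this, sub_smul]
        rw [h1] at h0
        exact sub_eq_zero.mp h0
      have hnorm2 : ‖y2‖ ≤ ‖y.2‖ := by
        have h1 := K.orthogonalProjectionOnto.le_opNorm y.2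
        have h2 := K.orthogonalProjectionOnto_norm_le
        calc ‖y2‖ ≤ ‖K.orthogonalProjectionOnto‖ * ‖y.2‖ := h1
          _ ≤ 1 * ‖y.2‖ := mul_le_mul_of_nonneg_right h2 (norm_nonneg _)
          _ = ‖y.2‖ := one_mul _
      set τ : ℝ := ‖y2‖ / y.1 with hτdef
      have hτ0 : 0 ≤ τ := div_nonneg (norm_nonneg _) hy1pos.le
      have hτ1 : τ ≤ 1 := by
        rw [hτdef, div_le_one hy1pos]
        exact le_trans hnorm2 hy
      -- the sequence
      set t : ℕ → ℝ := fun k => ((k : ℝ) + 1)⁻¹ with htdef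
      have htpos : ∀ k, 0 < t k := fun k => by positivity
      have htne : ∀ k, t k ≠ 0 := fun k => (htpos k).ne'
      set xs : ℕ → Evec n := fun k => xb + t k • d with hxsdef
      have ht0 : Tendsto t atTop (𝓝 0) := by
        simpa [htdef, one_div] using tendsto_one_div_add_atTop_nhds_zero_nat (𝕜 := ℝ)
      have hxs : Tendsto xs atTop (𝓝 xb) := by
        have h1 : Tendsto (fun k => xb + t k • d) atTop (𝓝 (xb + (0 : ℝ) • d)) :=
          Tendsto.const_add xb (ht0.smul_const d)
        rw [zero_smul, add_zero] at h1
        exact h1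
      -- the rescaled sequence converges to y2
      set ψ : ℕ → Evec (m ℓ) := fun k => (t k)⁻¹ • gh ℓ (xs k) with hψdef
      have hD : HasFDerivAt (gh ℓ) (fderiv ℝ (gh ℓ) xb) xb := (hdiff xb).hasFDerivAt
      set D : Evec n →L[ℝ] Evec (m ℓ) := fderiv ℝ (gh ℓ) xb with hDdef
      have hDd : Bmap G d = D d := by
        ext i
        rw [Bmap_apply]
        have hcoord' : HasFDerivAt (⇑(EuclideanSpace.proj (𝕜 := ℝ) i) ∘ gh ℓ)
            ((EuclideanSpace.proj i).comp D) xb :=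
          (EuclideanSpace.proj (𝕜 := ℝ) i).hasFDerivAt.comp xb hD
        have hcoord : HasFDerivAt (fun z => gh ℓ z i)
            ((EuclideanSpace.proj i).comp D) xb := hcoord'
        have : (inner ℝ (G i) d : ℝ) = fderiv ℝ (fun z => gh ℓ z i) xb d := by
          rw [hG]; exact inner_gradient _ _ _
        rw [this, hcoord.fderiv]
        rfl
      have hDy2 : D d = y2 := by rw [← hDd, hd]
      have hψlim : Tendsto ψ atTop (𝓝 y2) := by
        have hline : HasDerivAt (fun s : ℝ => xb + s • d) d 0 := by
          simpa using ((hasDerivAt_id (0 : ℝ)).smul_const d).const_add xb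
        have hD2 : HasFDerivAt (gh ℓ) D (xb + (0 : ℝ) • d) := by
          rw [zero_smul, add_zero]; exact hD
        have hφ : HasDerivAt (fun s : ℝ => gh ℓ (xb + s • d)) (D d) 0 :=
          hD2.comp_hasDerivAt 0 hline
        have hsl : Tendsto (slope (fun s : ℝ => gh ℓ (xb + s • d)) 0) (𝓝[≠] 0)
            (𝓝 (D d)) := hasDerivAt_iff_tendsto_slope.mp hφ
        have htW : Tendsto t atTop (𝓝[≠] (0 : ℝ)) := by
          rw [tendsto_nhdsWithin_iff]
          exact ⟨ht0, Filter.Eventually.of_forall fun k => htne k⟩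
        have hcomp := hsl.comp htW
        rw [hDy2] at hcomp
        refine Tendsto.congr (fun k => ?_) hcomp
        show slope (fun s : ℝ => gh ℓ (xb + s • d)) 0 (t k) = ψ k
        rw [slope_def_module]
        simp [hψdef, hxsdef, hh0]
      -- apply weak-Robinson to the sequence
      obtain ⟨I, w, wb, hI, heig, hPLI⟩ := hwr xs hxs
      -- the key vector identity
      have hwvec : ∀ i, ((1 + τ) / 2 - (1 - τ) / 2) * wb ℓ i = y.1⁻¹ * y2 i := by
        have hco : (1 + τ) / 2 - (1 - τ) / 2 = τ := by ring
        by_cases hy2z : y2 = 0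
        · intro i
          have hτz : τ = 0 := by rw [hτdef, hy2z, norm_zero, zero_div]
          have : y2 i = 0 := by rw [hy2z]; rfl
          rw [hco, hτz, this, zero_mul, mul_zero]
        · -- forcing: wb ℓ = unitv y2
          have hno : ‖y2‖ ≠ 0 := norm_ne_zero_iff.mpr hy2z
          have hψne : ∀ᶠ k in atTop, ψ k ≠ 0 := hψlim.eventually_ne hy2z
          have hUlim : Tendsto (fun k => unitv (ψ k)) atTop (𝓝 (unitv y2)) := by
            unfold unitv
            exact (hψlim.norm.inv₀ hno).smul hψlim
          haveI : (atTop ⊓ 𝓟 I : Filter ℕ).NeBot := infinite_neBot hI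
          have hwl : Tendsto (fun k => w k ℓ) (atTop ⊓ 𝓟 I) (𝓝 (wb ℓ)) :=
            (heig.2 ℓ hmem).2
          have hEq : ∀ᶠ k in (atTop ⊓ 𝓟 I : Filter ℕ), w k ℓ = unitv (ψ k) := by
            have h1 : ∀ᶠ k in (atTop ⊓ 𝓟 I : Filter ℕ), k ∈ I := by
              rw [Filter.eventually_inf_principal]
              exact Filter.Eventually.of_forall fun k hk => hk
            have h2 : ∀ᶠ k in (atTop ⊓ 𝓟 I : Filter ℕ), ψ k ≠ 0 :=
              hψne.filter_mono inf_le_left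
            filter_upwards [h1, h2] with k hkI hkne
            have hgne : gh ℓ (xs k) ≠ 0 := by
              intro h
              apply hkne
              rw [hψdef]; simp only []; rw [h, smul_zero]
            have hwk := (heig.1 k hkI ℓ hmem).2 (by simpa using hgne)
            rw [hwk]
            have hrepr : gh ℓ (xs k) = t k • ψ k := (smul_inv_smul₀ (htne k) _).symm
            simp only [Prod.snd_zero, add_zero]
            rw [hrepr, unitv_smul_pos (htpos k)]
          have hwl2 : Tendsto (fun k => w k ℓ) (atTop ⊓ 𝓟 I) (𝓝 (unitv y2)) :=
            ((hUlim.mono_left inf_le_left).congr' (hEq.mono fun k hk => hk.symm))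
          have hwb : wb ℓ = unitv y2 := tendsto_nhds_unique hwl hwl2
          intro i
          rw [hco, hwb]
          have : unitv y2 i = ‖y2‖⁻¹ * y2 i := rfl
          rw [this, hτdef]
          field_simp
      -- build the positive combination and contradict famPosLinIndep
      set a : Fin q → ℝ := fun j => if j = ℓ then (1 - τ) / 2 else 0 with hadef
      set b : Fin q → ℝ := fun j => if j = ℓ then (1 + τ) / 2 else 0 with hbdef
      have hcomb : famComb g0 gh xb wb 0 a b = 0 := by
        rw [famComb, Fintype.sum_eq_single ℓ (fun j hj => by
          simp [hadef, hbdef, hj])]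
        simp only [hadef, hbdef, if_pos rfl, Pi.zero_apply, zero_smul, zero_add]
        rw [dgT, dgT]
        exact comb_zero G0 G y.1 ((1 - τ) / 2) ((1 + τ) / 2) y.2 y2 (wb ℓ) hy1
          (by ring) hdy hzsum hwvec
      have hres := hPLI 0 a b (fun j => le_rfl)
        (fun j => by rw [hadef]; dsimp only; split
                     · linarith
                     · exact le_rfl)
        (fun j => by rw [hbdef]; dsimp only; split
                     · linarith
                     · exact le_rfl)
        (fun j _ => rfl)
        (fun j hj => by
          have hjne : j ≠ ℓ := fun h => hj (h ▸ hmem)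
          constructor
          · rw [hadef]; exact if_neg hjne
          · rw [hbdef]; exact if_neg hjne)
        hcomb ℓ
      have hbl : b ℓ = 0 := hres.2.2
      rw [hbdef] at hbl
      simp at hbl
      linarith
  · rintro ⟨hne, heqB⟩ hzero
    obtain ⟨I, w, wb, hI, heig, hPLI⟩ := hwr (fun _ => xb) tendsto_const_nhds
    set η : Fin q → ℝ := fun j => if j = ℓ then 1 else 0 with hηdef
    have hcomb : famComb g0 gh xb wb η 0 0 = 0 := by
      rw [famComb, Fintype.sum_eq_single ℓ (fun j hj => by simp [hηdef, hj])]
      simp [hηdef, hzero]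
    have hres := hPLI η 0 0
      (fun j => by rw [hηdef]; dsimp only; split <;> norm_num)
      (fun j => le_rfl) (fun j => le_rfl)
      (fun j hj => by
        have hjne : j ≠ ℓ := fun h => hj (h ▸ (⟨hne, heqB⟩ : memIB g0 gh xb ℓ))
        rw [hηdef]; exact if_neg hjne)
      (fun j _ => ⟨rfl, rfl⟩)
      hcomb ℓ
    have : η ℓ = 0 := hres.1
    rw [hηdef] at this
    simp at this
end
end
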